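/- Sufficiency direction of the binary margin classifier threshold (Corollary 3.6): let l : ℝ → ℝ be continuously differentiable, suppose a := inf_{t∈ℝ} t·l'(t) is finite and attained at some t_a ∈ ℝ, and suppose sup_{t∈ℝ} t·l'(t) = +∞. Let w ∈ ℝ^d, let μ be a finitely supported probability measure on ℝ^d with c := ⟨w, g(μ)⟩ > 0 where g(ν) := E_{x∼ν}[l'(⟨w,x⟩)·x], and let λ ∈ (0,1] satisfy λ ≥ c/(c − a). Then there exists a single point x_p ∈ ℝ^d (which can be taken of the form x_p = α·g(μ) for some α ∈ ℝ) such that (1−λ)·g(μ) + λ·l'(⟨w,x_p⟩)·x_p = 0. -/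
import Mathlib


open scoped RealInnerProductSpace BigOperators

/-- A finitely supported probability measure, represented as a finitely supported
weight function which is nonnegative and sums to 1. -/
def IsFinProb {Z : Type*} (p : Z →₀ ℝ) : Prop :=
  (∀ z, 0 ≤ p z) ∧ p.sum (fun _ w => w) = 1

/-- Expectation `E_{z ∼ p}[g z]` of a vector-valued map under a finitely supported measure. -/
noncomputable def expect {Z E : Type*} [AddCommMonoid E] [Module ℝ E]
    (p : Z →₀ ℝ) (g : Z → E) : E :=
  p.sum fun z w => w • g z

/-- Pointwise gradient `l'(⟨w,x⟩)·x` of the binary margin loss `ℓ(x; w) = l(⟨w,x⟩)`. -/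
noncomputable def gmargin {d : ℕ} (l' : ℝ → ℝ) (w x : EuclideanSpace ℝ (Fin d)) :
    EuclideanSpace ℝ (Fin d) :=
  l' ⟪w, x⟫ • x

/-- sufficiency direction of the binary margin classifier threshold
(Corollary 3.6). If `l` is continuously differentiable, `a = inf_t t·l'(t)` is finite
and attained, `sup_t t·l'(t) = +∞`, `c = ⟨w, g(μ)⟩ > 0`, and `λ ∈ (0,1]` with
`λ ≥ c/(c − a)`, then a single poisoning point of the form `x_p = α·g(μ)`
cancels the mixed gradient. -/
theorem stmt17 {d : ℕ} (l : ℝ → ℝ) (l' : ℝ → ℝ)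
    (hl : ∀ t : ℝ, HasDerivAt l (l' t) t) (hl' : Continuous l')
    (a : ℝ) (ta : ℝ) (ha_lb : ∀ t : ℝ, a ≤ t * l' t) (ha_att : ta * l' ta = a)
    (hsup : ∀ M : ℝ, ∃ t : ℝ, M < t * l' t)
    (w : EuclideanSpace ℝ (Fin d))
    (μ : EuclideanSpace ℝ (Fin d) →₀ ℝ) (hμ : IsFinProb μ)
    (hc : 0 < ⟪w, expect μ (gmargin l' w)⟫)
    (lam : ℝ) (h0 : 0 < lam) (h1 : lam ≤ 1)
    (hge : lam ≥ ⟪w, expect μ (gmargin l' w)⟫ / (⟪w, expect μ (gmargin l' w)⟫ - a)) :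
    ∃ (α : ℝ) (xp : EuclideanSpace ℝ (Fin d)), xp = α • expect μ (gmargin l' w) ∧
      (1 - lam) • expect μ (gmargin l' w) + lam • (l' ⟪w, xp⟫ • xp) = 0 := by
  set g := expect μ (gmargin l' w) with hg
  set c : ℝ := ⟪w, g⟫ with hcdef
  have ha0 : a ≤ 0 := by simpa using ha_lb 0
  have hca : 0 < c - a := by linarith
  -- target value
  set τ : ℝ := c * (lam - 1) / lam with hτ
  have haτ : a ≤ τ := by
    rw [ge_iff_le, div_le_iff₀ hca] at hge
    rw [hτ, le_div_iff₀ h0]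
    nlinarith
  obtain ⟨t1, ht1⟩ := hsup τ
  have hfc : Continuous (fun t : ℝ => t * l' t) := continuous_id.mul hl'
  have hmem : τ ∈ Set.Icc (ta * l' ta) (t1 * l' t1) := ⟨ha_att ▸ haτ, le_of_lt ht1⟩
  obtain ⟨t, ht⟩ := intermediate_value_univ ta t1 hfc hmem
  have hcne : c ≠ 0 := ne_of_gt hc
  refine ⟨t / c, (t / c) • g, rfl, ?_⟩
  have hip : ⟪w, (t / c) • g⟫ = t := by
    rw [real_inner_smul_right, ← hcdef]
    field_simp
  rw [hip, smul_smul, smul_smul, ← add_smul]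
  have : t * l' t = τ := ht
  have hcoef : 1 - lam + lam * (l' t * (t / c)) = 0 := by
    have : l' t * (t / c) = τ / c := by
      rw [← this]; ring
    rw [this, hτ]
    field_simp
    ring
  have hcoef2 : 1 - lam + lam * l' t * (t / c) = 0 := by rw [mul_assoc]; exact hcoef
  rw [hcoef2, zero_smul]
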